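/- Let H be a digraph on a finite vertex set V with n = |V| ≥ 2 vertices, equipped with an edge-weight function w : E → ℕ satisfying 1 ≤ w(e) < ω for every edge e, where ω ∈ ℕ. Let r ∈ V, let d1 < d2 be natural numbers, both divisible by ω, with d2 − d1 ≥ 2·ω·lg n, and let k ≥ 1 be an integer. Suppose |{v ∈ V : d_{H,w}(r, v) ≤ d1}| ≥ k and |{v ∈ V : d_{H,w}(r, v) ≥ d2}| ≥ k, where unreachable vertices have distance ∞. Then there exists an integer d divisible by ω with d1 < d ≤ d2 such that the set S = {v ∈ V : d − ω < d_{H,w}(r, v) ≤ d} is a q-quality separator of H with q = (d2 − d1)/(2·ω·lg n), and every SCC of H ∖ E(S) contains at most n − k vertices. -/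

import Mathlib

variable {V : Type*}

/-- Unweighted walk distance in the digraph with edge relation `E`:
the minimum number of edges of a walk from `u` to `v`, `∞` if none exists. -/
noncomputable def ddist (E : V → V → Prop) (u v : V) : ℕ∞ :=
  sInf { n : ℕ∞ | ∃ l : List V, l.Chain' E ∧ l.head? = some u ∧ l.getLast? = some v ∧
    n = ((l.length - 1 : ℕ) : ℕ∞) }

/-- Weighted walk distance: the minimum total weight of a walk from `u` to `v`. -/
noncomputable def wdist (E : V → V → Prop) (w : V → V → ℕ) (u v : V) : ℕ∞ :=
  sInf { n : ℕ∞ | ∃ l : List V, l.Chain' E ∧ l.head? = some u ∧ l.getLast? = some v ∧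
    n = ((((l.zip l.tail).map fun p => w p.1 p.2).sum : ℕ) : ℕ∞) }

/-- The digraph `H ∖ E(S)`: edges of `E` with neither endpoint in `S`. -/
def edgesAvoiding (E : V → V → Prop) (S : Set V) : V → V → Prop :=
  fun a b => E a b ∧ a ∉ S ∧ b ∉ S

/-- The strongly connected component of `v`: vertices mutually reachable with `v`. -/
def scc (E : V → V → Prop) (v : V) : Set V :=
  {u | Relation.ReflTransGen E u v ∧ Relation.ReflTransGen E v u}

/-- `S` is a `q`-quality separator: every SCC of `H ∖ E(S)` has at most `|V| - q·|S|` vertices. -/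
def QualSep [Fintype V] (E : V → V → Prop) (q : ℝ) (S : Set V) : Prop :=
  ∀ v : V, ((scc (edgesAvoiding E S) v).ncard : ℝ) ≤ (Fintype.card V : ℝ) - q * S.ncard

/-- Edge relation of the induced subdigraph on `C`. -/
def induced (E : V → V → Prop) (C : Set V) : V → V → Prop :=
  fun a b => E a b ∧ a ∈ C ∧ b ∈ C

/-- The (finite) collection of vertex sets of the SCCs of the digraph. -/
noncomputable def sccs [Fintype V] (E : V → V → Prop) : Finset (Set V) :=
  letI := Classical.decEq (Set V)
  Finset.image (fun v => scc E v) Finset.univ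


/-!
Removing the edges at the layer `S = {d - ω < dist ≤ d}` cuts `H` into pieces: as every edge
weighs less than `ω`, no remaining edge leaves the ball `{dist ≤ d - ω}`, and the vertices of `S`
become isolated. So every SCC of `H ∖ E(S)` lies in the inner ball, is a single vertex of `S`, or
avoids the ball `{dist ≤ d}`. With `b i` the size of the ball of radius `d1 + i ω`, the layer `i`
is therefore a `q`-quality separator once `q (b i - b (i - 1))` is at most both `b i` and
`n - b (i - 1)`. If every `i < m = (d2 - d1) / ω` failed, each step would multiply
`b / (n - b)` by at least `q / (q - 1)`; since `log (q / (q - 1)) ≥ 1 / q + 1 / (2 q²)` and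
`m = 2 q lg n`, the total growth would exceed `n²`, whereas `b / (n - b)` stays between
`k / (n - k)` and `(n - k) / k`.
-/

theorem inv_add_inv_sq_div_two_le_log_div_sub_one {q : ℝ} (hq : 1 < q) :
    q⁻¹ + q⁻¹ ^ 2 / 2 ≤ Real.log (q / (q - 1)) := by
  have hx : |q⁻¹| < 1 := by
    rw [abs_of_pos (by positivity)]; exact inv_lt_one_of_one_lt₀ hq
  have hsum := sum_le_hasSum (Finset.range 2) (fun i _ => by positivity)
    (Real.hasSum_pow_div_log_of_abs_lt_one hx)
  have hfirst : ∑ i ∈ Finset.range 2, q⁻¹ ^ (i + 1) / (i + 1 : ℝ) = q⁻¹ + q⁻¹ ^ 2 / 2 := by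
    norm_num [Finset.sum_range_succ]
  have hlog : -Real.log (1 - q⁻¹) = Real.log (q / (q - 1)) := by
    rw [← Real.log_inv]; congr 1; field_simp
  rw [← hfirst, ← hlog]
  exact hsum

theorem one_le_logb_two_of_two_le {x : ℝ} (hx : 2 ≤ x) : 1 ≤ Real.logb 2 x := by
  rw [Real.le_logb_iff_rpow_le one_lt_two (by linarith), Real.rpow_one]; exact hx

theorem sq_le_pow_of_two_mul_logb_le {x q : ℝ} {m : ℕ} (hx : 2 ≤ x) (hq : 1 < q)
    (hm : 2 * q * Real.logb 2 x ≤ m) : x ^ 2 ≤ (q / (q - 1)) ^ (m - 1) := by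
  have hL := one_le_logb_two_of_two_le hx
  have hm1 : ((m - 1 : ℕ) : ℝ) = m - 1 := by
    have : 1 ≤ m := by exact_mod_cast (show (1:ℝ) ≤ m by nlinarith)
    push_cast [this]; ring
  have hlogx : Real.log x = Real.logb 2 x * Real.log 2 := by
    rw [Real.logb, div_mul_cancel₀ _ (Real.log_pos one_lt_two).ne']
  have hlogρ := inv_add_inv_sq_div_two_le_log_div_sub_one hq
  rw [← Real.log_le_log_iff (by positivity) (by positivity), Real.log_pow, Real.log_pow, hm1,
    hlogx]
  have key : 2 * Real.logb 2 x - 1 / 2 ≤ ((m:ℝ) - 1) * Real.log (q / (q - 1)) := by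
    have hq0 : 0 < q := by linarith
    calc 2 * Real.logb 2 x - 1 / 2 ≤ (2 * q * Real.logb 2 x - 1) * (q⁻¹ + q⁻¹ ^ 2 / 2) := by
          field_simp; nlinarith
      _ ≤ ((m:ℝ) - 1) * Real.log (q / (q - 1)) := by
          gcongr
          nlinarith
  nlinarith [Real.log_two_lt_d9]

theorem pow_mul_mul_le_of_forall_or {ρ : ℝ} {u v : ℕ → ℝ} (hρ : 0 ≤ ρ) (hu : Monotone u)
    (hv : Antitone v) (hu0 : 0 ≤ u 0) (hv0 : 0 ≤ v 0) {j : ℕ}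
    (hstep : ∀ i < j, ρ * u i ≤ u (i + 1) ∨ ρ * v (i + 1) ≤ v i) :
    ρ ^ j * u 0 * v j ≤ u j * v 0 := by
  induction j with
  | zero => simp
  | succ j ih =>
    have ih := ih fun i hi => hstep i (by omega)
    have hu' : u j * v 0 ≤ u (j + 1) * v 0 := by gcongr; exact hu j.le_succ
    have hv' : v (j + 1) ≤ v j := hv j.le_succ
    rcases hstep j j.lt_succ_self with hgrow | hshrink
    · calc ρ ^ (j + 1) * u 0 * v (j + 1) ≤ ρ ^ (j + 1) * u 0 * v j := by gcongr
        _ = ρ * (ρ ^ j * u 0 * v j) := by ring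
        _ ≤ ρ * (u j * v 0) := by gcongr
        _ ≤ u (j + 1) * v 0 := by rw [← mul_assoc]; gcongr
    · calc ρ ^ (j + 1) * u 0 * v (j + 1) = ρ ^ j * u 0 * (ρ * v (j + 1)) := by ring
        _ ≤ ρ ^ j * u 0 * v j := by gcongr
        _ ≤ u (j + 1) * v 0 := ih.trans hu'

theorem div_sub_one_mul_lt_of_lt_mul_sub {q x y : ℝ} (hq : 1 < q) (h : y < q * (y - x)) :
    q / (q - 1) * x < y := by
  rw [div_mul_eq_mul_div, div_lt_iff₀ (by linarith)]
  linarith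

theorem exists_index_mul_sub_le {q N k : ℝ} {b : ℕ → ℝ} {j : ℕ} (hb : Monotone b) (hk : 1 ≤ k)
    (hb0 : k ≤ b 0) (hbj : b j ≤ N - k) (hj : 1 ≤ j)
    (hρ : 1 < q → N ^ 2 ≤ (q / (q - 1)) ^ j) :
    ∃ i, 1 ≤ i ∧ i ≤ j ∧ q * (b i - b (i - 1)) ≤ b i ∧ q * (b i - b (i - 1)) ≤ N - b (i - 1) := by
  rcases le_or_gt q 1 with hq | hq
  · have h01 : b 0 ≤ b 1 := hb zero_le_one
    have h1j : b 1 ≤ b j := hb hj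
    refine ⟨1, le_rfl, hj, ?_, ?_⟩ <;> nlinarith
  by_contra! hcon
  set ρ := q / (q - 1)
  have hρ0 : 0 ≤ ρ := div_nonneg (by linarith) (by linarith)
  have hstep : ∀ i < j, ρ * b i ≤ b (i + 1) ∨ ρ * (N - b (i + 1)) ≤ N - b i := by
    intro i hi
    by_cases hgrow : q * (b (i + 1) - b i) ≤ b (i + 1)
    · right
      have := hcon (i + 1) (by omega) (by omega) hgrow
      rw [Nat.add_sub_cancel] at this
      exact (div_sub_one_mul_lt_of_lt_mul_sub hq (by linarith)).le
    · exact Or.inl (div_sub_one_mul_lt_of_lt_mul_sub hq (by linarith)).le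
  have hbj0 : b 0 ≤ b j := hb (Nat.zero_le j)
  have hchain : ρ ^ j * b 0 * (N - b j) ≤ b j * (N - b 0) :=
    pow_mul_mul_le_of_forall_or hρ0 hb (fun _ _ h => sub_le_sub_left (hb h) N) (by linarith)
      (by linarith) hstep
  have hpow : 0 ≤ ρ ^ j := pow_nonneg hρ0 j
  have hsq : ρ ^ j * k ^ 2 ≤ (N - k) ^ 2 :=
    calc ρ ^ j * k ^ 2 ≤ ρ ^ j * b 0 * (N - b j) := by
          rw [sq, ← mul_assoc]
          exact mul_le_mul (mul_le_mul_of_nonneg_left hb0 hpow) (by linarith) (by linarith)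
            (mul_nonneg hpow (by linarith))
      _ ≤ b j * (N - b 0) := hchain
      _ ≤ (N - k) * (N - k) := by gcongr <;> linarith
      _ = (N - k) ^ 2 := (sq _).symm
  nlinarith [hρ hq, mul_le_mul_of_nonneg_left (one_le_pow₀ hk : 1 ≤ k ^ 2) hpow,
    mul_pos (by linarith : 0 < k) (by linarith : 0 < 2 * N - k)]

def walkWeight (w : V → V → ℕ) (l : List V) : ℕ :=
  ((l.zip l.tail).map fun p => w p.1 p.2).sum

theorem walkWeight_append_singleton (w : V → V → ℕ) :
    ∀ (l : List V) (u y : V), l.getLast? = some u →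
      walkWeight w (l ++ [y]) = walkWeight w l + w u y
  | [], _, _, h => by simp at h
  | [a], u, y, h => by simp_all [walkWeight]
  | a :: b :: t, u, y, h => by
    have ih := walkWeight_append_singleton w (b :: t) u y (by simpa using h)
    simp only [walkWeight, List.cons_append, List.tail_cons, List.zip_cons_cons, List.map_cons,
      List.sum_cons] at ih ⊢
    omega

theorem wdist_le_add_weight {E : V → V → Prop} {w : V → V → ℕ} {r u v : V} (huv : E u v) :
    wdist E w r v ≤ wdist E w r u + w u v := by
  set s := {n : ℕ∞ | ∃ l : List V, l.IsChain E ∧ l.head? = some r ∧ l.getLast? = some u ∧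
    n = (walkWeight w l : ℕ∞)}
  have hu : wdist E w r u = sInf s := rfl
  rcases s.eq_empty_or_nonempty with h | h
  · simp [hu, h]
  obtain ⟨l, hl, hhead, hlast, hmin⟩ := csInf_mem h
  rw [hu, hmin]
  refine sInf_le ⟨l ++ [v], ?_, ?_, by simp, ?_⟩
  · exact hl.append (List.isChain_singleton v) fun x hx y hy => by simp_all
  · cases l <;> simp_all
  · change _ = ((walkWeight w (l ++ [v]) : ℕ) : ℕ∞)
    rw [walkWeight_append_singleton w l u v hlast, Nat.cast_add]

def ball (E : V → V → Prop) (w : V → V → ℕ) (r : V) (c : ℕ) : Set V :=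
  {v | wdist E w r v ≤ c}

def layer (E : V → V → Prop) (w : V → V → ℕ) (r : V) (a b : ℕ) : Set V :=
  {v | (a : ℕ∞) < wdist E w r v ∧ wdist E w r v ≤ b}

section Layer

variable {E : V → V → Prop} {w : V → V → ℕ} {r : V} {a b : ℕ}

theorem ball_mono (hab : a ≤ b) : ball E w r a ⊆ ball E w r b :=
  fun v (hv : wdist E w r v ≤ a) => show wdist E w r v ≤ b from hv.trans (by exact_mod_cast hab)

theorem layer_eq_ball_diff : layer E w r a b = ball E w r b \ ball E w r a := by
  ext v
  simp [layer, ball, and_comm]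

theorem ncard_layer_add_ncard_ball [Finite V] (hab : a ≤ b) :
    (layer E w r a b).ncard + (ball E w r a).ncard = (ball E w r b).ncard := by
  rw [layer_eq_ball_diff, Set.ncard_sdiff_add_ncard_of_subset (ball_mono hab) (Set.toFinite _)]

theorem ncard_ball_add_ncard_le [Fintype V] (hab : a < b) :
    (ball E w r a).ncard + {v | (b : ℕ∞) ≤ wdist E w r v}.ncard ≤ Fintype.card V := by
  rw [← Set.ncard_union_eq ?_ (Set.toFinite _) (Set.toFinite _)]
  · exact (Set.ncard_le_ncard (Set.subset_univ _)).trans_eq (by simp)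
  refine Set.disjoint_left.mpr fun v hva hvb => ?_
  have : ((a : ℕ) : ℕ∞) < b := by exact_mod_cast hab
  exact (hvb.trans hva).not_gt this

theorem mem_ball_of_reflTransGen (hw : ∀ x y, E x y → a + w x y ≤ b) {x y : V}
    (hxy : Relation.ReflTransGen (edgesAvoiding E (layer E w r a b)) x y)
    (hx : x ∈ ball E w r a) : y ∈ ball E w r a := by
  induction hxy with
  | refl => exact hx
  | @tail y z _ hyz ih =>
    obtain ⟨hE, -, hz⟩ := hyz
    by_contra hza
    refine hz ⟨not_le.mp hza, ?_⟩
    calc wdist E w r z ≤ wdist E w r y + w y z := wdist_le_add_weight hE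
      _ ≤ a + w y z := by gcongr; exact ih
      _ ≤ b := by exact_mod_cast hw y z hE

theorem scc_edgesAvoiding_of_mem {S : Set V} {v : V} (hv : v ∈ S) :
    scc (edgesAvoiding E S) v = {v} := by
  refine Set.eq_singleton_iff_unique_mem.mpr ⟨⟨.refl, .refl⟩, fun u hu => ?_⟩
  rcases hu.2.cases_head with rfl | ⟨_, hvz, _⟩
  · rfl
  · exact absurd hv hvz.2.1

theorem scc_layer_trichotomy (hw : ∀ x y, E x y → a + w x y ≤ b) (v : V) :
    scc (edgesAvoiding E (layer E w r a b)) v ⊆ ball E w r a ∨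
      scc (edgesAvoiding E (layer E w r a b)) v = {v} ∨
      scc (edgesAvoiding E (layer E w r a b)) v ⊆ (ball E w r b)ᶜ := by
  by_cases hva : v ∈ ball E w r a
  · exact Or.inl fun u hu => mem_ball_of_reflTransGen hw hu.2 hva
  by_cases hvS : v ∈ layer E w r a b
  · exact Or.inr (Or.inl (scc_edgesAvoiding_of_mem hvS))
  have hvb : v ∉ ball E w r b := by
    rw [layer_eq_ball_diff] at hvS
    exact fun hvb => hvS ⟨hvb, hva⟩
  refine Or.inr (Or.inr fun u hu hub => ?_)
  by_cases hua : u ∈ ball E w r a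
  · exact hva (mem_ball_of_reflTransGen hw hu.1 hua)
  · have huS : u ∈ layer E w r a b := by rw [layer_eq_ball_diff]; exact ⟨hub, hua⟩
    have hvu : v ∈ scc (edgesAvoiding E (layer E w r a b)) u := ⟨hu.2, hu.1⟩
    rw [scc_edgesAvoiding_of_mem huS, Set.mem_singleton_iff] at hvu
    exact hvS (hvu ▸ huS)

theorem ncard_scc_layer_le [Fintype V] (hw : ∀ x y, E x y → a + w x y ≤ b) {c : ℝ}
    (ha : ((ball E w r a).ncard : ℝ) ≤ c) (h1 : 1 ≤ c)
    (hb : (Fintype.card V : ℝ) - (ball E w r b).ncard ≤ c) (v : V) :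
    ((scc (edgesAvoiding E (layer E w r a b)) v).ncard : ℝ) ≤ c := by
  rcases scc_layer_trichotomy hw v with h | h | h
  · exact (Nat.cast_le.mpr (Set.ncard_le_ncard h)).trans ha
  · rw [h, Set.ncard_singleton]; exact_mod_cast h1
  · have hcompl := Set.ncard_add_ncard_compl (ball E w r b)
    rw [Nat.card_eq_fintype_card] at hcompl
    have := Set.ncard_le_ncard h
    have : ((scc (edgesAvoiding E (layer E w r a b)) v).ncard : ℝ) + (ball E w r b).ncard ≤
        Fintype.card V := by exact_mod_cast (by omega)
    linarith

theorem qualSep_layer_and_ncard_scc_le [Fintype V] (hw : ∀ x y, E x y → a + w x y ≤ b)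
    (hab : a ≤ b) {q : ℝ} {k : ℕ} (hk : 1 ≤ k) (hka : k ≤ (ball E w r a).ncard)
    (hakn : (ball E w r a).ncard + k ≤ Fintype.card V)
    (hqb : q * ((ball E w r b).ncard - (ball E w r a).ncard) ≤ (ball E w r b).ncard)
    (hqa : q * ((ball E w r b).ncard - (ball E w r a).ncard) ≤
      Fintype.card V - (ball E w r a).ncard) :
    QualSep E q (layer E w r a b) ∧
      ∀ v, (scc (edgesAvoiding E (layer E w r a b)) v).ncard ≤ Fintype.card V - k := by
  have hlayer : ((layer E w r a b).ncard : ℝ) = (ball E w r b).ncard - (ball E w r a).ncard := by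
    rw [← ncard_layer_add_ncard_ball hab]; push_cast; ring
  have hkb : k ≤ (ball E w r b).ncard :=
    hka.trans (Set.ncard_le_ncard (ball_mono hab) (Set.toFinite _))
  have hkR : (1 : ℝ) ≤ k := by exact_mod_cast hk
  have hkaR : (k : ℝ) ≤ (ball E w r a).ncard := by exact_mod_cast hka
  refine ⟨fun v => ncard_scc_layer_le hw ?_ ?_ ?_ v, fun v => ?_⟩
  · rw [hlayer]; linarith
  · rw [hlayer]; linarith
  · rw [hlayer]; linarith
  · have hc : ((Fintype.card V - k : ℕ) : ℝ) = Fintype.card V - k := Nat.cast_sub (by omega)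
    have hkbR : (k : ℝ) ≤ (ball E w r b).ncard := by exact_mod_cast hkb
    have haknR : ((ball E w r a).ncard : ℝ) + k ≤ Fintype.card V := by exact_mod_cast hakn
    exact_mod_cast ncard_scc_layer_le hw (c := ((Fintype.card V - k : ℕ) : ℝ))
      (by rw [hc]; linarith) (by rw [hc]; linarith) (by rw [hc]; linarith) v

end Layer

/-- the WThinLayer lemma (existence content). -/
theorem stmt7 {V : Type*} [Fintype V] (E : V → V → Prop) (w : V → V → ℕ) (ω : ℕ)
    (hw : ∀ a b, E a b → 1 ≤ w a b ∧ w a b < ω)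
    (r : V) (hn : 2 ≤ Fintype.card V)
    (d1 d2 : ℕ) (hd : d1 < d2) (hdiv1 : ω ∣ d1) (hdiv2 : ω ∣ d2)
    (hgap : 2 * ω * Real.logb 2 (Fintype.card V) ≤ (d2 : ℝ) - d1)
    (k : ℕ) (hk : 1 ≤ k)
    (h1 : k ≤ {v : V | wdist E w r v ≤ (d1 : ℕ∞)}.ncard)
    (h2 : k ≤ {v : V | (d2 : ℕ∞) ≤ wdist E w r v}.ncard) :
    ∃ d : ℕ, ω ∣ d ∧ d1 < d ∧ d ≤ d2 ∧
      QualSep E ((d2 - d1 : ℝ) / (2 * ω * Real.logb 2 (Fintype.card V)))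
        {v : V | ((d - ω : ℕ) : ℕ∞) < wdist E w r v ∧ wdist E w r v ≤ (d : ℕ∞)} ∧
      ∀ v : V,
        (scc (edgesAvoiding E
            {v : V | ((d - ω : ℕ) : ℕ∞) < wdist E w r v ∧ wdist E w r v ≤ (d : ℕ∞)}) v).ncard
          ≤ Fintype.card V - k := by
  set n := Fintype.card V
  set L := Real.logb 2 n
  have hL : 1 ≤ L := one_le_logb_two_of_two_le (by exact_mod_cast hn)
  obtain ⟨m, rfl⟩ : ∃ m, d2 = d1 + m * ω :=
    ⟨(d2 - d1) / ω, by rw [Nat.div_mul_cancel (Nat.dvd_sub hdiv2 hdiv1)]; omega⟩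
  have hω : 0 < ω := Nat.pos_of_ne_zero (by rintro rfl; simp at hd)
  have hmL : 2 * L ≤ m := by
    push_cast at hgap
    exact le_of_mul_le_mul_left (by linarith) (by positivity : (0 : ℝ) < ω)
  have hm : 2 ≤ m := by exact_mod_cast (show (2 : ℝ) ≤ m by linarith)
  have hq : (((d1 + m * ω : ℕ) : ℝ) - d1) / (2 * ω * L) = m / (2 * L) := by
    push_cast; field_simp; ring
  have hlow : ∀ j, k ≤ (ball E w r (d1 + j * ω)).ncard := fun j =>
    (h1.trans_eq rfl : k ≤ (ball E w r d1).ncard).trans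
      (Set.ncard_le_ncard (ball_mono (Nat.le_add_right _ _)))
  have hhigh : ∀ j < m, (ball E w r (d1 + j * ω)).ncard + k ≤ n := fun j hj =>
    (Nat.add_le_add_left h2 _).trans (ncard_ball_add_ncard_le (by gcongr))
  set b : ℕ → ℝ := fun j => (ball E w r (d1 + j * ω)).ncard
  have hb : Monotone b := fun i j hij =>
    Nat.mono_cast (Set.ncard_le_ncard (ball_mono (by gcongr)))
  have hb0 : (k : ℝ) ≤ b 0 := by simp only [b]; exact_mod_cast hlow 0
  have hbm : b (m - 1) ≤ n - k := by
    simp only [b]; rw [le_sub_iff_add_le]; exact_mod_cast hhigh (m - 1) (by omega)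
  obtain ⟨i, hi, him, hqb, hqa⟩ := exists_index_mul_sub_le (q := m / (2 * L)) hb
    (by exact_mod_cast hk) hb0 hbm (by omega) fun hq1 =>
      sq_le_pow_of_two_mul_logb_le (by exact_mod_cast hn) hq1 (by field_simp; rfl)
  have hiω : (i - 1) * ω + ω = i * ω := by
    rw [← Nat.succ_mul, Nat.succ_eq_add_one, Nat.sub_add_cancel hi]
  have hsub : d1 + i * ω - ω = d1 + (i - 1) * ω := by omega
  have hw' : ∀ x y, E x y → d1 + (i - 1) * ω + w x y ≤ d1 + i * ω := fun x y hxy => by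
    have := (hw x y hxy).2; omega
  obtain ⟨hqs, hscc⟩ := qualSep_layer_and_ncard_scc_le hw' (by omega) hk (hlow _)
    (hhigh _ (by omega)) hqb hqa
  refine ⟨d1 + i * ω, dvd_add hdiv1 (dvd_mul_left ω i), by nlinarith, by gcongr; omega, ?_, ?_⟩
  · rw [hsub, hq]; exact hqs
  · rw [hsub]; exact hscc
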